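/- In the enveloping algebra A^e of A = k⟨X,Y⟩/(X^a, XY−qYX, Y^a) with q a primitive a-th root of unity, the identity β_x(−1)·β_y(1) = β_y(−1)·β_x(1) holds, where β_x(s) = ∑_{i=0}^{a-2} c_i q^{si} (x^{a-2-i} ⊗ x^i), β_y(s) = ∑_{i=0}^{a-2} c_i q^{si} (y^i ⊗ y^{a-2-i}), and c_i = 1+q+...+q^i. -/

import Mathlib

open scoped TensorProduct
open Finset MulOpposite

noncomputable section

inductive QciRel (k : Type) [Field k] (a : ℕ) (q : k) :
    FreeAlgebra k (Fin 2) → FreeAlgebra k (Fin 2) → Prop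
  | xa : QciRel k a q ((FreeAlgebra.ι k (0 : Fin 2)) ^ a) 0
  | ya : QciRel k a q ((FreeAlgebra.ι k (1 : Fin 2)) ^ a) 0
  | comm : QciRel k a q (FreeAlgebra.ι k (0 : Fin 2) * FreeAlgebra.ι k (1 : Fin 2))
      (algebraMap k (FreeAlgebra k (Fin 2)) q *
        (FreeAlgebra.ι k (1 : Fin 2) * FreeAlgebra.ι k (0 : Fin 2)))

/-- The quantum complete intersection `k⟨X,Y⟩/(X^a, XY - qYX, Y^a)`. -/
abbrev Qci (k : Type) [Field k] (a : ℕ) (q : k) := RingQuot (QciRel k a q)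

/-- The image of `X` in the quantum complete intersection. -/
def qx (k : Type) [Field k] (a : ℕ) (q : k) : Qci k a q :=
  RingQuot.mkAlgHom k (QciRel k a q) (FreeAlgebra.ι k (0 : Fin 2))

/-- The image of `Y` in the quantum complete intersection. -/
def qy (k : Type) [Field k] (a : ℕ) (q : k) : Qci k a q :=
  RingQuot.mkAlgHom k (QciRel k a q) (FreeAlgebra.ι k (1 : Fin 2))
/-!
Expanding both products, the `(i, j)` term on the left and the `(j, i)` term on the right are
scalar multiples of the same pure tensor `y^j x^(a-2-i) ⊗ op (y^(a-2-j) x^i)`, by the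
`q`-commutation rule `x^m y^n = q^(mn) y^n x^m`. The two scalars differ by `q^(a(j-i)) = 1`,
so the identity holds term by term.
-/

theorem qx_mul_qy (k : Type) [Field k] (a : ℕ) (q : k) :
    qx k a q * qy k a q = q • (qy k a q * qx k a q) := by
  have h := RingQuot.mkAlgHom_rel k (QciRel.comm (k := k) (a := a) (q := q))
  rwa [map_mul, map_mul, map_mul, AlgHom.commutes, ← Algebra.smul_def] at h

section QCommuting

variable {R B : Type*} [CommSemiring R] [Semiring B] [Algebra R B]

theorem mul_pow_eq_smul_of_mul_eq_smul {q : R} {u v : B} (h : u * v = q • (v * u)) (n : ℕ) :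
    u * v ^ n = q ^ n • (v ^ n * u) := by
  induction n with
  | zero => simp
  | succ n ih =>
    rw [pow_succ', ← mul_assoc, h, smul_mul_assoc, mul_assoc, ih, mul_smul_comm, smul_smul,
      ← mul_assoc, ← pow_succ', ← pow_succ']

theorem pow_mul_pow_eq_smul_of_mul_eq_smul {q : R} {u v : B} (h : u * v = q • (v * u))
    (m n : ℕ) : u ^ m * v ^ n = q ^ (m * n) • (v ^ n * u ^ m) := by
  induction m with
  | zero => simp
  | succ m ih =>
    rw [pow_succ, mul_assoc, mul_pow_eq_smul_of_mul_eq_smul h, mul_smul_comm, ← mul_assoc, ih,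
      smul_mul_assoc, smul_smul, ← pow_add, mul_assoc, ← pow_succ,
      Nat.add_comm n, ← Nat.succ_mul]

end QCommuting

theorem zpow_neg_mul_zpow_mul_pow_eq {K : Type*} [CommGroupWithZero K] {q : K} {a m n i j : ℕ}
    (hq : q ^ a = 1) (hi : m + i + 2 = a) (hj : n + j + 2 = a) :
    q ^ (-(i : ℤ)) * q ^ (j : ℤ) * q ^ (m * j) =
      q ^ (-(j : ℤ)) * q ^ (i : ℤ) * q ^ (i * n) := by
  have hq0 : q ≠ 0 := by
    rintro rfl
    simp [zero_pow (show a ≠ 0 by omega)] at hq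
  have hexp : -(i : ℤ) + j + (m * j : ℕ) = (-(j : ℤ) + i + (i * n : ℕ)) + a * (j - i) := by
    have hi' : (m : ℤ) + i + 2 = a := mod_cast hi
    have hj' : (n : ℤ) + j + 2 = a := mod_cast hj
    push_cast
    linear_combination (j : ℤ) * hi' - (i : ℤ) * hj'
  simp only [← zpow_natCast q (_ * _), ← zpow_add₀ hq0]
  rw [hexp, zpow_add₀ hq0, zpow_mul, zpow_natCast, hq, one_zpow, mul_one]

theorem smul_tmul_op_mul_smul_tmul_op_comm {K B : Type*} [Field K] [Ring B] [Algebra K B]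
    {q : K} {u v : B} {a m n i j : ℕ} (h : u * v = q • (v * u)) (hq : q ^ a = 1)
    (hi : m + i + 2 = a) (hj : n + j + 2 = a) (α β : K) :
    (α * q ^ (-(i : ℤ))) • ((u ^ m) ⊗ₜ[K] op (u ^ i)) *
        ((β * q ^ (j : ℤ)) • ((v ^ j) ⊗ₜ[K] op (v ^ n))) =
      (β * q ^ (-(j : ℤ))) • ((v ^ j) ⊗ₜ[K] op (v ^ n)) *
        ((α * q ^ (i : ℤ)) • ((u ^ m) ⊗ₜ[K] op (u ^ i))) := by
  rw [smul_mul_smul_comm, smul_mul_smul_comm, Algebra.TensorProduct.tmul_mul_tmul,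
    Algebra.TensorProduct.tmul_mul_tmul, ← op_mul, ← op_mul,
    pow_mul_pow_eq_smul_of_mul_eq_smul h m j, pow_mul_pow_eq_smul_of_mul_eq_smul h i n, op_smul,
    TensorProduct.smul_tmul', TensorProduct.tmul_smul, smul_smul, smul_smul]
  have hscalar : α * q ^ (-(i : ℤ)) * (β * q ^ (j : ℤ)) * q ^ (m * j) =
      β * q ^ (-(j : ℤ)) * (α * q ^ (i : ℤ)) * q ^ (i * n) := by
    linear_combination (α * β) * zpow_neg_mul_zpow_mul_pow_eq hq hi hj
  rw [hscalar, TensorProduct.smul_tmul']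

theorem stmt_13_general (k : Type) [Field k] (a : ℕ) (q : k)
    (hq : IsPrimitiveRoot q a)
    (c : ℕ → k) :
    let x := qx k a q
    let y := qy k a q
    let βx : ℤ → Qci k a q ⊗[k] (Qci k a q)ᵐᵒᵖ := fun s =>
      ∑ i ∈ range (a - 1), (c i * q ^ (s * (i : ℤ))) •
        ((x ^ (a - 2 - i) : Qci k a q) ⊗ₜ[k] (op (x ^ i) : (Qci k a q)ᵐᵒᵖ))
    let βy : ℤ → Qci k a q ⊗[k] (Qci k a q)ᵐᵒᵖ := fun s =>
      ∑ i ∈ range (a - 1), (c i * q ^ (s * (i : ℤ))) •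
        ((y ^ i : Qci k a q) ⊗ₜ[k] (op (y ^ (a - 2 - i)) : (Qci k a q)ᵐᵒᵖ))
    βx (-1) * βy 1 = βy (-1) * βx 1 := by
  intro x y βx βy
  simp only [βx, βy, sum_mul_sum]
  conv_rhs => rw [sum_comm]
  refine sum_congr rfl fun i hi => sum_congr rfl fun j hj => ?_
  rw [mem_range] at hi hj
  simp only [neg_one_mul, one_mul]
  exact smul_tmul_op_mul_smul_tmul_op_comm (qx_mul_qy k a q) hq.pow_eq_one
    (by omega) (by omega) _ _

/-- In `A^e = A ⊗ A^op` for `A = k⟨X,Y⟩/(X^a, XY−qYX, Y^a)`: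
`β_x(−1) · β_y(1) = β_y(−1) · β_x(1)`. -/
theorem stmt_13 (k : Type) [Field k] (a : ℕ) (ha : 3 ≤ a) (q : k)
    (hq : IsPrimitiveRoot q a)
    (c : ℕ → k) (hc : ∀ i, c i = ∑ j ∈ range (i + 1), q ^ j) :
    let x := qx k a q
    let y := qy k a q
    let βx : ℤ → Qci k a q ⊗[k] (Qci k a q)ᵐᵒᵖ := fun s =>
      ∑ i ∈ range (a - 1), (c i * q ^ (s * (i : ℤ))) •
        ((x ^ (a - 2 - i) : Qci k a q) ⊗ₜ[k] (op (x ^ i) : (Qci k a q)ᵐᵒᵖ))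
    let βy : ℤ → Qci k a q ⊗[k] (Qci k a q)ᵐᵒᵖ := fun s =>
      ∑ i ∈ range (a - 1), (c i * q ^ (s * (i : ℤ))) •
        ((y ^ i : Qci k a q) ⊗ₜ[k] (op (y ^ (a - 2 - i)) : (Qci k a q)ᵐᵒᵖ))
    βx (-1) * βy 1 = βy (-1) * βx 1 :=
  stmt_13_general k a q hq c
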